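/- arXiv:2410.19638 — 2 statements merged into one kernel-verified Lean document; each statement's English description precedes it below -/
import Mathlib

section
/- Let π be a permutation of the vertices of a connected graph G (mapping each vertex to the target of the token starting on it) with cycle decomposition C_1 ∘ ... ∘ C_k, where cycle C_i has vertices v_{i,0},...,v_{i,ℓ_i−1}. Then there exists a solving swap sequence of length Σ_{i=1}^{k} Σ_{j=1}^{ℓ_i−1} (2·dist(v_{i,j−1}, v_{i,j}) − 1), and this quantity is strictly less than 2·total(K) whenever π is not the identity. -/
/-!
Each cycle `(v₀ v₁ … v_{ℓ-1})` of `π` factors as `(v₀ v₁)(v₁ v₂)⋯(v_{ℓ-2} v_{ℓ-1})`, and a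
transposition `(u v)` is realized by `2·dist(u, v) - 1` adjacent swaps: bubble the token of `u`
along a shortest path to `v`, then bubble the displaced token back, since
`(u v) = (u b)(b v)(u b)` for the neighbour `b` of `u` on the path. Concatenating over the
disjoint cycles solves `π` with the stated number of swaps. Each summand `2·dist - 1` is below
`2·dist`, the summands of a cycle omit its closing edge, and a nontrivial `π` has a cycle of
length at least `2`, where the inequality is strict.
-/

/-- Apply a list of swaps to a configuration `f : T ≃ V`. -/
noncomputable def applySwaps {V T : Type*} (f : T ≃ V) (s : List (V × V)) : T ≃ V :=
  letI := Classical.decEq V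
  s.foldl (fun g e => g.trans (Equiv.swap e.1 e.2)) f

open Equiv Finset

section ApplySwaps

variable {T V : Type*}

theorem applySwaps_append (f : T ≃ V) (s t : List (V × V)) :
    applySwaps f (s ++ t) = applySwaps (applySwaps f s) t :=
  List.foldl_append

theorem applySwaps_trans {U : Type*} (f : U ≃ T) (g : T ≃ V) (s : List (V × V)) :
    applySwaps (f.trans g) s = f.trans (applySwaps g s) := by
  induction s generalizing g with
  | nil => rfl
  | cons e s ih =>
    simp only [applySwaps, List.foldl_cons] at ih ⊢
    rw [Equiv.trans_assoc]
    exact ih _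

theorem applySwaps_refl_singleton [DecidableEq V] (a b : V) :
    applySwaps (Equiv.refl V) [(a, b)] = swap a b := by
  simp only [applySwaps, List.foldl_cons, List.foldl_nil, Equiv.refl_trans]
  congr
  exact Subsingleton.elim _ _

end ApplySwaps

namespace SimpleGraph

variable {V : Type*} (G : SimpleGraph V)

def SwapRealizable (σ : Perm V) (m : ℕ) : Prop :=
  ∃ s : List (V × V), (∀ e ∈ s, G.Adj e.1 e.2) ∧ applySwaps (Equiv.refl V) s = σ ∧ s.length = m

variable {G}

namespace SwapRealizable

theorem one : G.SwapRealizable 1 0 := ⟨[], by simp, rfl, rfl⟩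

theorem mul {σ τ : Perm V} {a b : ℕ} (hσ : G.SwapRealizable σ a) (hτ : G.SwapRealizable τ b) :
    G.SwapRealizable (σ * τ) (a + b) := by
  obtain ⟨s, hs, rfl, rfl⟩ := hσ
  obtain ⟨t, ht, rfl, rfl⟩ := hτ
  refine ⟨t ++ s, fun e he => (List.mem_append.1 he).elim (ht e) (hs e), ?_, by simp [add_comm]⟩
  rw [applySwaps_append, ← Equiv.trans_refl (applySwaps _ t), applySwaps_trans]
  rfl

theorem list_prod {ι : Type*} {c : ι → Perm V} {m : ι → ℕ} (L : List ι)
    (h : ∀ i ∈ L, G.SwapRealizable (c i) (m i)) :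
    G.SwapRealizable (L.map c).prod (L.map m).sum := by
  induction L with
  | nil => exact one
  | cons i L ih =>
    simpa using (h i (by simp)).mul (ih fun j hj => h j (by simp [hj]))

variable [DecidableEq V]

theorem of_adj {a b : V} (h : G.Adj a b) : G.SwapRealizable (swap a b) 1 :=
  ⟨[(a, b)], by simpa using h, applySwaps_refl_singleton a b, rfl⟩

theorem swap_of_isPath {u v : V} (p : G.Walk u v) (hp : p.IsPath) :
    G.SwapRealizable (swap u v) (2 * p.length - 1) := by
  induction p with
  | nil => rw [swap_self]; exact one
  | @cons u b v hub q ih =>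
    rw [Walk.cons_isPath_iff] at hp
    rcases Nat.eq_zero_or_pos q.length with hq | hq
    · obtain rfl : b = v := Walk.eq_of_length_eq_zero hq
      simpa [hq] using of_adj hub
    · have hbv : b ≠ v := fun h => by
        subst h; exact hq.ne' (Walk.length_eq_zero_iff.2 (Walk.isPath_iff_nil.1 hp.1))
      have huv : u ≠ v := fun h => hp.2 (h ▸ q.end_mem_support)
      have hconj : swap u b * swap b v * swap u b = swap u v := by
        rw [swap_comm u b, swap_comm b v, swap_mul_swap_mul_swap hbv.symm huv.symm]
      rw [← hconj]
      convert ((of_adj hub).mul (ih hp.1)).mul (of_adj hub) using 1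
      simp only [Walk.length_cons]
      omega

theorem swap_of_connected (hG : G.Connected) (u v : V) :
    G.SwapRealizable (swap u v) (2 * G.dist u v - 1) := by
  obtain ⟨p, hp, hlen⟩ := hG.exists_path_of_dist u v
  exact hlen ▸ swap_of_isPath p hp

theorem formPerm_map_range (hG : G.Connected) (v : ℕ → V) (t : ℕ) :
    G.SwapRealizable ((List.range t).map v).formPerm
      (∑ j ∈ Ico 1 t, (2 * G.dist (v (j - 1)) (v j) - 1)) := by
  induction t with
  | zero => convert one using 1 <;> simp
  | succ t ih =>
    rcases t with _ | t
    · convert one using 1 <;> simp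
    · have hsplit : (List.range (t + 2)).map v = (List.range t).map v ++ [v t, v (t + 1)] := by
        simp [List.range_succ]
      have hinit : (List.range t).map v ++ [v t] = (List.range (t + 1)).map v := by
        simp [List.range_succ]
      rw [hsplit, List.formPerm_append_pair, hinit, sum_Ico_succ_top (by omega)]
      exact ih.mul (swap_of_connected hG _ _)

end SwapRealizable

end SimpleGraph

section PermListProd

variable {V : Type*}

theorem List.prod_map_perm_apply_of_forall_eq_self {ι : Type*} (c : ι → Equiv.Perm V) {x : V}
    (L : List ι) (h : ∀ i ∈ L, c i x = x) : (L.map c).prod x = x := by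
  induction L with
  | nil => rfl
  | cons i L ih =>
    simp only [List.map_cons, List.prod_cons, Equiv.Perm.mul_apply]
    rw [ih fun j hj => h j (by simp [hj]), h i (by simp)]

theorem List.prod_map_perm_apply_of_nodup {ι : Type*} (c : ι → Equiv.Perm V) {L : List ι}
    (hL : L.Nodup) {i : ι} (hi : i ∈ L) {x : V} (hx : ∀ j ∈ L, j ≠ i → c j x = x)
    (hy : ∀ j ∈ L, j ≠ i → c j (c i x) = c i x) : (L.map c).prod x = c i x := by
  induction L with
  | nil => simp at hi
  | cons a L ih =>
    rw [List.nodup_cons] at hL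
    simp only [List.map_cons, List.prod_cons, Equiv.Perm.mul_apply]
    by_cases hai : a = i
    · subst hai
      rw [List.prod_map_perm_apply_of_forall_eq_self c L fun j hj =>
        hx j (by simp [hj]) (fun h => hL.1 (h ▸ hj))]
    · rw [ih hL.2 ((List.mem_cons.1 hi).resolve_left (Ne.symm hai))
          (fun j hj => hx j (by simp [hj])) (fun j hj => hy j (by simp [hj])),
        hy a (by simp) hai]

end PermListProd

section Cycles

variable {V : Type*} [DecidableEq V] {m : ℕ}

def cyclePerm (u : ZMod m → V) : Perm V :=
  ((List.range m).map fun j : ℕ => u j).formPerm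

theorem cyclePerm_apply [NeZero m] {u : ZMod m → V} (hu : Function.Injective u) (j : ZMod m) :
    cyclePerm u (u j) = u (j + 1) := by
  have hnodup : ((List.range m).map fun j : ℕ => u j).Nodup := by
    refine List.nodup_range.map_on fun a ha b hb hab => ?_
    have := congrArg ZMod.val (hu hab)
    rwa [ZMod.val_cast_of_lt (List.mem_range.1 ha),
      ZMod.val_cast_of_lt (List.mem_range.1 hb)] at this
  have hj : u j = ((List.range m).map fun j : ℕ => u j)[j.val]'(by simpa using j.val_lt) := by
    simp
  rw [cyclePerm, hj, List.formPerm_apply_getElem _ hnodup]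
  simp

theorem cyclePerm_apply_of_notMem (u : ZMod m → V) {x : V} (hx : x ∉ Set.range u) :
    cyclePerm u x = x :=
  List.formPerm_apply_of_notMem fun h => by
    obtain ⟨a, -, rfl⟩ := List.mem_map.1 h
    exact hx ⟨a, rfl⟩

theorem eq_prod_cyclePerm {k : ℕ} {ℓ : Fin k → ℕ} [∀ i, NeZero (ℓ i)] (π : Perm V)
    (w : ((i : Fin k) × ZMod (ℓ i)) ≃ V)
    (hcyc : ∀ (i : Fin k) (j : ZMod (ℓ i)), π (w ⟨i, j⟩) = w ⟨i, j + 1⟩) :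
    π = ((List.finRange k).map fun i => cyclePerm fun j => w ⟨i, j⟩).prod := by
  have hfix : ∀ i i', i' ≠ i → ∀ a, (cyclePerm fun j => w ⟨i', j⟩) (w ⟨i, a⟩) = w ⟨i, a⟩ :=
    fun i i' hne a => cyclePerm_apply_of_notMem _ fun ⟨b, hb⟩ =>
      hne (congrArg Sigma.fst (w.injective hb))
  ext x
  obtain ⟨⟨i, j⟩, rfl⟩ := w.surjective x
  have hu : Function.Injective fun j => w ⟨i, j⟩ := w.injective.comp sigma_mk_injective
  rw [hcyc, List.prod_map_perm_apply_of_nodup _ (List.nodup_finRange k) (List.mem_finRange i)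
      (fun i' _ hne => hfix i i' hne j)
      (fun i' _ hne => by rw [cyclePerm_apply hu]; exact hfix i i' hne _),
    cyclePerm_apply hu]

end Cycles

namespace SimpleGraph

variable {V : Type*} (G : SimpleGraph V) {m : ℕ}

noncomputable def cycleSwapCost (u : ZMod m → V) : ℕ :=
  ∑ j ∈ Ico 1 m, (2 * G.dist (u ↑(j - 1)) (u ↑j) - 1)

noncomputable def cycleTotal [NeZero m] (u : ZMod m → V) : ℕ :=
  ∑ a, G.dist (u a) (u (a + 1))

variable {G}

theorem SwapRealizable.cyclePerm [DecidableEq V] (hG : G.Connected) (u : ZMod m → V) :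
    G.SwapRealizable (cyclePerm u) (G.cycleSwapCost u) :=
  formPerm_map_range hG _ m

variable [NeZero m]

theorem sum_Ico_two_mul_dist_le (u : ZMod m → V) :
    ∑ j ∈ Ico 1 m, 2 * G.dist (u ↑(j - 1)) (u ↑j) ≤ 2 * G.cycleTotal u := by
  rw [← mul_sum]
  gcongr
  have hinj : Set.InjOn (fun j : ℕ => ((j - 1 : ℕ) : ZMod m)) (Ico 1 m) := fun a ha b hb hab => by
    have := congrArg ZMod.val hab
    simp only [coe_Ico, Set.mem_Ico] at ha hb
    rw [ZMod.val_cast_of_lt (by omega), ZMod.val_cast_of_lt (by omega)] at this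
    omega
  calc ∑ j ∈ Ico 1 m, G.dist (u ↑(j - 1)) (u ↑j)
      = ∑ j ∈ Ico 1 m, G.dist (u ↑(j - 1)) (u (↑(j - 1) + 1)) := by
        refine sum_congr rfl fun j hj => ?_
        rw [← Nat.cast_add_one, Nat.sub_add_cancel (mem_Ico.1 hj).1]
    _ = ∑ a ∈ (Ico 1 m).image fun j : ℕ => ((j - 1 : ℕ) : ZMod m), G.dist (u a) (u (a + 1)) :=
        (sum_image (f := fun a => G.dist (u a) (u (a + 1))) hinj).symm
    _ ≤ G.cycleTotal u := sum_le_sum_of_subset (subset_univ _)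

theorem cycleSwapCost_le (u : ZMod m → V) : G.cycleSwapCost u ≤ 2 * G.cycleTotal u :=
  calc G.cycleSwapCost u ≤ ∑ j ∈ Ico 1 m, 2 * G.dist (u ↑(j - 1)) (u ↑j) :=
        sum_le_sum fun _ _ => Nat.sub_le _ _
    _ ≤ 2 * G.cycleTotal u := sum_Ico_two_mul_dist_le u

theorem cycleSwapCost_lt (hG : G.Connected) {u : ZMod m → V} (hu : Function.Injective u)
    (hm : 1 < m) : G.cycleSwapCost u < 2 * G.cycleTotal u := by
  have hpos : ∀ j ∈ Ico 1 m, 0 < G.dist (u ↑(j - 1)) (u ↑j) := fun j hj => by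
    refine hG.pos_dist_of_ne fun h => ?_
    have := congrArg ZMod.val (hu h)
    rw [mem_Ico] at hj
    rw [ZMod.val_cast_of_lt (by omega), ZMod.val_cast_of_lt hj.2] at this
    omega
  calc G.cycleSwapCost u < ∑ j ∈ Ico 1 m, 2 * G.dist (u ↑(j - 1)) (u ↑j) :=
        sum_lt_sum_of_nonempty ⟨1, mem_Ico.2 ⟨le_rfl, hm⟩⟩ fun j hj => by
          have := hpos j hj
          omega
    _ ≤ 2 * G.cycleTotal u := sum_Ico_two_mul_dist_le u

end SimpleGraph

section CycleDecomposition

variable {V ι : Type*} {ℓ : ι → ℕ} [∀ i, NeZero (ℓ i)]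

theorem SimpleGraph.sum_dist_apply_eq_sum_cycleTotal [Fintype V] [Fintype ι]
    (G : SimpleGraph V) (π : Perm V) (w : ((i : ι) × ZMod (ℓ i)) ≃ V)
    (hcyc : ∀ (i : ι) (j : ZMod (ℓ i)), π (w ⟨i, j⟩) = w ⟨i, j + 1⟩) :
    ∑ v, G.dist v (π v) = ∑ i, G.cycleTotal fun j => w ⟨i, j⟩ := by
  rw [← w.sum_comp, Fintype.sum_sigma]
  simp only [hcyc, SimpleGraph.cycleTotal]

theorem exists_one_lt_of_cycles_of_ne_one {π : Perm V} (w : ((i : ι) × ZMod (ℓ i)) ≃ V)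
    (hcyc : ∀ (i : ι) (j : ZMod (ℓ i)), π (w ⟨i, j⟩) = w ⟨i, j + 1⟩) (hπ : π ≠ 1) :
    ∃ i, 1 < ℓ i := by
  by_contra! h
  refine hπ (Equiv.ext fun x => ?_)
  obtain ⟨⟨i, j⟩, rfl⟩ := w.surjective x
  have : Subsingleton (ZMod (ℓ i)) := by
    rw [show ℓ i = 1 by have := NeZero.pos (ℓ i); have := h i; omega]
    infer_instance
  rw [hcyc, Subsingleton.elim (j + 1) j, Perm.one_apply]

end CycleDecomposition

/-- Given a permutation `π` of the vertices of a connected graph `G` with cycle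
decomposition given by `w : (Σ i, ZMod (ℓ i)) ≃ V` (cycle `i` visits
`w ⟨i,0⟩, w ⟨i,1⟩, ...` and `π (w ⟨i,j⟩) = w ⟨i,j+1⟩`), there is a solving swap
sequence of length `Σ_i Σ_{j=1}^{ℓ_i − 1} (2·dist(v_{i,j−1}, v_{i,j}) − 1)`, and
this quantity is strictly less than `2·total(K)` whenever `π ≠ 1`. -/
theorem stmt7 (n : ℕ) (G : SimpleGraph (Fin n)) (hG : G.Connected)
    (π : Equiv.Perm (Fin n)) (k : ℕ) (ℓ : Fin k → ℕ) (hℓ : ∀ i, 0 < ℓ i)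
    (w : ((i : Fin k) × ZMod (ℓ i)) ≃ Fin n)
    (hcyc : ∀ (i : Fin k) (j : ZMod (ℓ i)), π (w ⟨i, j⟩) = w ⟨i, j + 1⟩) :
    (∃ s : List (Fin n × Fin n), (∀ e ∈ s, G.Adj e.1 e.2) ∧
        applySwaps (Equiv.refl (Fin n)) s = π ∧
        s.length = ∑ i : Fin k, ∑ j ∈ Finset.Ico 1 (ℓ i),
          (2 * G.dist (w ⟨i, ((j - 1 : ℕ) : ZMod (ℓ i))⟩) (w ⟨i, ((j : ℕ) : ZMod (ℓ i))⟩) - 1)) ∧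
    (π ≠ 1 →
      ∑ i : Fin k, ∑ j ∈ Finset.Ico 1 (ℓ i),
          (2 * G.dist (w ⟨i, ((j - 1 : ℕ) : ZMod (ℓ i))⟩) (w ⟨i, ((j : ℕ) : ZMod (ℓ i))⟩) - 1)
        < 2 * ∑ v : Fin n, G.dist v (π v)) := by
  have : ∀ i, NeZero (ℓ i) := fun i => ⟨(hℓ i).ne'⟩
  refine ⟨?_, fun hπ => ?_⟩
  · obtain ⟨s, hs, happly, hlen⟩ := SimpleGraph.SwapRealizable.list_prod (List.finRange k)
      fun i _ => SimpleGraph.SwapRealizable.cyclePerm hG fun j => w ⟨i, j⟩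
    exact ⟨s, hs, happly.trans (eq_prod_cyclePerm π w hcyc).symm,
      hlen.trans (Fin.sum_univ_def _).symm⟩
  · obtain ⟨i, hi⟩ := exists_one_lt_of_cycles_of_ne_one w hcyc hπ
    change ∑ i, G.cycleSwapCost (fun j => w ⟨i, j⟩) < _
    rw [G.sum_dist_apply_eq_sum_cycleTotal π w hcyc, mul_sum]
    exact sum_lt_sum (fun i _ => SimpleGraph.cycleSwapCost_le _)
      ⟨i, mem_univ i, SimpleGraph.cycleSwapCost_lt hG (w.injective.comp sigma_mk_injective) hi⟩
end

section
/- Consider a cycle of length p(q−1) containing p/2 special vertices evenly spaced, each carrying a token whose target is the next special vertex 2q−2 steps clockwise, with all other tokens wanting to stay put. Then any solving swap sequence (using only edges of this cycle) has length greater than 2pq − 5p/2 − 4q. -/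
/-- The cycle graph on `ZMod n`: `v` adjacent to `v + 1`. -/
def cycleG (n : ℕ) : SimpleGraph (ZMod n) :=
  SimpleGraph.fromRel (fun a b => b = a + 1)

/-!
Lift the positions of the tokens from the cycle `ZMod n`, `n = p(q-1)`, to `ℤ`: token `t` starts at
`t.val`, and a swap moves one token up by one and the other down by one. A solving sequence thus
ends in a lift `L` of the target permutation with the same sum as at the start. For tokens
`b.val < a.val`, `⌊(L a - L b) / n⌋` counts how often `a` has lapped `b`; a swap changes this count
only for the two tokens it exchanges, and by at most one, so the length of the sequence is at least
the sum of the absolute values of all these counts.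

With `c = 2q-2`, write `L = targetLift + n W`, where `targetLift` moves every special token `c`
steps ahead. The special tokens advance by `(p/2) c = n` in total, so `∑ W = -1`. The count of a
pair is `W a - W b`, minus one when `a` is ordinary and `b` is the special vertex just behind it.
Shift `W` to have minimum `0` on a set `Z`, so that `∑ W ≥ n - 1`. The pairs joining `Z` to its
complement contribute `|Z| ∑ W`. The pair of an ordinary vertex with its special predecessor adds
one more, except for at most `(c-1)|Z|` vertices whose predecessor lies in `Z`, which may lose one,
and for vertices with `W ≥ 2`, which are paid for by `∑ W ≥ n - |Z| + #{W ≥ 2}`. As `n ≥ 2c`, this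
gives at least `2n - p/2 - 2c + 1`.
-/

open Finset

lemma Int.ediv_add_eq_ediv_of_not_dvd {n D k : ℤ} (hn : 0 < n) (hk : |k| ≤ 1)
    (hD : ¬ n ∣ D) (hDk : ¬ n ∣ D + k) : (D + k) / n = D / n := by
  have ⟨hlo, hhi⟩ := (Int.ediv_eq_iff_of_pos hn).1 (rfl : D / n = D / n)
  rw [Int.ediv_eq_iff_of_pos hn]
  have h1 : D / n * n ≠ D := fun h => hD (Dvd.intro_left _ h)
  have h2 : D / n * n ≠ D + k := fun h => hDk (Dvd.intro_left _ h)
  have h3 : D / n * n + n ≠ D + k := fun h => hDk (Dvd.intro_left (D / n + 1) (by linarith))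
  rw [abs_le] at hk
  omega

lemma Int.abs_ediv_add_sub_ediv_le_one {n k : ℤ} (D : ℤ) (hn : 0 < n) (hk : |k| ≤ n) :
    |(D + k) / n - D / n| ≤ 1 := by
  rw [abs_le] at hk
  have hup : (D + k) / n ≤ (D + n) / n := Int.ediv_le_ediv hn (by linarith)
  have hdown : (D - n) / n ≤ (D + k) / n := Int.ediv_le_ediv hn (by linarith)
  rw [Int.add_ediv_of_dvd_right (dvd_refl n), Int.ediv_self hn.ne'] at hup
  rw [sub_eq_add_neg, Int.add_ediv_of_dvd_right (dvd_neg.2 (dvd_refl n)),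
    Int.neg_ediv_self _ hn.ne'] at hdown
  rw [abs_le]; constructor <;> linarith

lemma applySwaps_cons {V T : Type*} [DecidableEq V] (f : T ≃ V) (e : V × V) (s : List (V × V)) :
    applySwaps f (e :: s) = applySwaps (f.trans (Equiv.swap e.1 e.2)) s := by
  unfold applySwaps; simp only [List.foldl_cons]; congr; exact Subsingleton.elim _ _

section Lift

variable {n : ℕ}

def edgeDir (e : ZMod n × ZMod n) : ℤ := if e.2 = e.1 + 1 then 1 else -1

def swapShift (e : ZMod n × ZMod n) (v : ZMod n) : ℤ :=
  if v = e.1 then edgeDir e else if v = e.2 then -edgeDir e else 0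

/-- `ℓ t` is an integer lift of the position of token `t`; starting from `t.val`, `ℓ t - t.val`
is clock(t) − counter(t). -/
def liftSwap (ℓ : ZMod n → ℤ) (e : ZMod n × ZMod n) : ZMod n → ℤ :=
  fun t => ℓ t + swapShift e (ℓ t)

def lap (ℓ : ZMod n → ℤ) (p : ZMod n × ZMod n) : ℤ := (ℓ p.1 - ℓ p.2) / n

def sortedPairs (n : ℕ) [NeZero n] : Finset (ZMod n × ZMod n) :=
  {p : ZMod n × ZMod n | p.2.val < p.1.val}

lemma add_swapShift_eq_swap {e : ZMod n × ZMod n} (he : (cycleG n).Adj e.1 e.2) (v : ZMod n) :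
    v + swapShift e v = Equiv.swap e.1 e.2 v := by
  obtain ⟨hne, hstep⟩ := (SimpleGraph.fromRel_adj _ _ _).1 he
  unfold swapShift edgeDir
  split_ifs <;> simp_all [Equiv.swap_apply_of_ne_of_ne]

lemma abs_swapShift_le_one (e : ZMod n × ZMod n) (v : ZMod n) : |swapShift e v| ≤ 1 := by
  unfold swapShift edgeDir
  split_ifs <;> simp

lemma swapShift_eq_zero {e : ZMod n × ZMod n} {v : ZMod n} (h1 : v ≠ e.1) (h2 : v ≠ e.2) :
    swapShift e v = 0 := by
  simp [swapShift, h1, h2]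

lemma sum_swapShift [NeZero n] {e : ZMod n × ZMod n} (hne : e.1 ≠ e.2) :
    ∑ v, swapShift e v = 0 := by
  rw [Fintype.sum_eq_add e.1 e.2 hne fun v hv => swapShift_eq_zero hv.1 hv.2]
  simp [swapShift, hne.symm]

variable {g : Equiv.Perm (ZMod n)} {ℓ : ZMod n → ℤ} {e : ZMod n × ZMod n}

lemma liftSwap_apply (hℓ : ∀ t, (ℓ t : ZMod n) = g t) (t : ZMod n) :
    liftSwap ℓ e t = ℓ t + swapShift e (g t) := by
  rw [liftSwap, hℓ]

lemma cast_liftSwap (he : (cycleG n).Adj e.1 e.2) (hℓ : ∀ t, (ℓ t : ZMod n) = g t) (t : ZMod n) :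
    (liftSwap ℓ e t : ZMod n) = Equiv.swap e.1 e.2 (g t) := by
  rw [liftSwap_apply hℓ, Int.cast_add, hℓ, add_swapShift_eq_swap he]

lemma sum_liftSwap [NeZero n] (hne : e.1 ≠ e.2) (hℓ : ∀ t, (ℓ t : ZMod n) = g t) :
    ∑ t, liftSwap ℓ e t = ∑ t, ℓ t := by
  simp_rw [liftSwap_apply hℓ, sum_add_distrib, Equiv.sum_comp g (swapShift e),
    sum_swapShift hne, add_zero]

lemma lap_liftSwap (hℓ : ∀ t, (ℓ t : ZMod n) = g t) (p : ZMod n × ZMod n) :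
    lap (liftSwap ℓ e) p = (ℓ p.1 - ℓ p.2 + (swapShift e (g p.1) - swapShift e (g p.2))) / n := by
  rw [lap, liftSwap_apply hℓ, liftSwap_apply hℓ]
  ring_nf

lemma lap_liftSwap_eq_lap [NeZero n] (he : (cycleG n).Adj e.1 e.2) (hℓ : ∀ t, (ℓ t : ZMod n) = g t)
    {p : ZMod n × ZMod n} (hp : p.1 ≠ p.2)
    (hoff : ¬ ((g p.1 = e.1 ∨ g p.1 = e.2) ∧ (g p.2 = e.1 ∨ g p.2 = e.2))) :
    lap (liftSwap ℓ e) p = lap ℓ p := by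
  have hshift : swapShift e (g p.1) = 0 ∨ swapShift e (g p.2) = 0 := by
    rw [not_and_or, not_or, not_or] at hoff
    exact hoff.imp (fun h => swapShift_eq_zero h.1 h.2) fun h => swapShift_eq_zero h.1 h.2
  have hk : |swapShift e (g p.1) - swapShift e (g p.2)| ≤ 1 := by
    have := abs_swapShift_le_one e (g p.1)
    have := abs_swapShift_le_one e (g p.2)
    rcases hshift with h | h <;> simp_all
  have hnot_dvd : ∀ x y : ZMod n, x ≠ y → ∀ D : ℤ, (D : ZMod n) = x - y → ¬ (n : ℤ) ∣ D :=
    fun x y hxy D hD hdvd =>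
      hxy <| sub_eq_zero.1 <| hD ▸ (ZMod.intCast_zmod_eq_zero_iff_dvd _ _).2 hdvd
  rw [lap_liftSwap hℓ, lap, Int.ediv_add_eq_ediv_of_not_dvd (by exact_mod_cast (NeZero.pos n)) hk]
  · exact hnot_dvd _ _ (g.injective.ne hp) _ (by push_cast; rw [hℓ, hℓ])
  · refine hnot_dvd _ _ ((Equiv.swap e.1 e.2).injective.ne (g.injective.ne hp)) _ ?_
    push_cast
    rw [hℓ, hℓ, ← add_swapShift_eq_swap he, ← add_swapShift_eq_swap he]
    ring

lemma two_le_of_cycleG_adj [NeZero n] (he : (cycleG n).Adj e.1 e.2) : 2 ≤ n := by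
  have : Nontrivial (ZMod n) := ⟨⟨e.1, e.2, he.ne⟩⟩
  have h1 := ZMod.nontrivial_iff.1 this
  have h0 := NeZero.ne n
  omega

lemma abs_lap_liftSwap_sub_le_one [NeZero n] (he : (cycleG n).Adj e.1 e.2)
    (hℓ : ∀ t, (ℓ t : ZMod n) = g t) (p : ZMod n × ZMod n) :
    |lap (liftSwap ℓ e) p - lap ℓ p| ≤ 1 := by
  rw [lap_liftSwap hℓ, lap]
  refine Int.abs_ediv_add_sub_ediv_le_one _ (by exact_mod_cast (NeZero.pos n)) ?_
  calc |swapShift e (g p.1) - swapShift e (g p.2)|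
      ≤ |swapShift e (g p.1)| + |swapShift e (g p.2)| := abs_sub _ _
    _ ≤ 1 + 1 := add_le_add (abs_swapShift_le_one _ _) (abs_swapShift_le_one _ _)
    _ ≤ n := by exact_mod_cast two_le_of_cycleG_adj he

lemma sum_abs_lap_liftSwap_sub_le_one [NeZero n] (he : (cycleG n).Adj e.1 e.2)
    (hℓ : ∀ t, (ℓ t : ZMod n) = g t) :
    ∑ p ∈ sortedPairs n, |lap (liftSwap ℓ e) p - lap ℓ p| ≤ 1 := by
  set E := (sortedPairs n).filter
    fun p => (g p.1 = e.1 ∨ g p.1 = e.2) ∧ (g p.2 = e.1 ∨ g p.2 = e.2)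
  have hmem : ∀ p ∈ E, ((p.1.val = (g.symm e.1).val ∨ p.1.val = (g.symm e.2).val) ∧
      (p.2.val = (g.symm e.1).val ∨ p.2.val = (g.symm e.2).val)) ∧ p.2.val < p.1.val := by
    intro p hp
    simp only [E, sortedPairs, mem_filter, mem_univ, true_and,
      ← Equiv.eq_symm_apply] at hp
    obtain ⟨hlt, h1, h2⟩ := hp
    exact ⟨⟨by rcases h1 with h | h <;> simp [h], by rcases h2 with h | h <;> simp [h]⟩, hlt⟩
  have hE : #E ≤ 1 := card_le_one.2 fun p hp q hq => by
    have := hmem p hp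
    have := hmem q hq
    exact Prod.ext (ZMod.val_injective n (by omega)) (ZMod.val_injective n (by omega))
  calc ∑ p ∈ sortedPairs n, |lap (liftSwap ℓ e) p - lap ℓ p|
      = ∑ p ∈ E, |lap (liftSwap ℓ e) p - lap ℓ p| := by
        refine (sum_subset (filter_subset _ _) fun p hp hpE => ?_).symm
        have hlt := (mem_filter.1 hp).2
        rw [lap_liftSwap_eq_lap he hℓ (fun h => by rw [h] at hlt; exact hlt.false)
          fun h => hpE (mem_filter.2 ⟨hp, h⟩), sub_self, abs_zero]
    _ ≤ ∑ _p ∈ E, 1 := sum_le_sum fun p _ => abs_lap_liftSwap_sub_le_one he hℓ p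
    _ ≤ 1 := by simpa using hE

variable {s : List (ZMod n × ZMod n)}

lemma cast_foldl_liftSwap (hs : ∀ e ∈ s, (cycleG n).Adj e.1 e.2)
    (hℓ : ∀ t, (ℓ t : ZMod n) = g t) (t : ZMod n) :
    (s.foldl liftSwap ℓ t : ZMod n) = applySwaps g s t := by
  induction s generalizing g ℓ with
  | nil => exact hℓ t
  | cons e s ih =>
    rw [applySwaps_cons]
    exact ih (fun e' h => hs e' (List.mem_cons_of_mem _ h))
      (cast_liftSwap (hs e List.mem_cons_self) hℓ)

lemma sum_foldl_liftSwap [NeZero n] (hs : ∀ e ∈ s, (cycleG n).Adj e.1 e.2)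
    (hℓ : ∀ t, (ℓ t : ZMod n) = g t) :
    ∑ t, s.foldl liftSwap ℓ t = ∑ t, ℓ t := by
  induction s generalizing g ℓ with
  | nil => rfl
  | cons e s ih =>
    have he := hs e List.mem_cons_self
    rw [List.foldl_cons, ih (g := g.trans (Equiv.swap e.1 e.2))
      (fun e' h => hs e' (List.mem_cons_of_mem _ h)) (cast_liftSwap he hℓ),
      sum_liftSwap he.ne hℓ]

lemma sum_abs_lap_foldl_liftSwap_sub_le [NeZero n] (hs : ∀ e ∈ s, (cycleG n).Adj e.1 e.2)
    (hℓ : ∀ t, (ℓ t : ZMod n) = g t) :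
    ∑ p ∈ sortedPairs n, |lap (s.foldl liftSwap ℓ) p - lap ℓ p| ≤ s.length := by
  induction s generalizing g ℓ with
  | nil => simp
  | cons e s ih =>
    have he := hs e List.mem_cons_self
    have ih := ih (g := g.trans (Equiv.swap e.1 e.2))
      (fun e' h => hs e' (List.mem_cons_of_mem _ h)) (cast_liftSwap he hℓ)
    calc ∑ p ∈ sortedPairs n, |lap ((e :: s).foldl liftSwap ℓ) p - lap ℓ p|
        ≤ ∑ p ∈ sortedPairs n, (|lap (s.foldl liftSwap (liftSwap ℓ e)) p - lap (liftSwap ℓ e) p|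
            + |lap (liftSwap ℓ e) p - lap ℓ p|) :=
          sum_le_sum fun p _ => abs_sub_le _ _ _
      _ ≤ s.length + 1 := by
          rw [sum_add_distrib]
          exact add_le_add ih (sum_abs_lap_liftSwap_sub_le_one he hℓ)
      _ = (e :: s).length := by simp

theorem exists_lift_of_applySwaps [NeZero n] {π : Equiv.Perm (ZMod n)}
    (hs : ∀ e ∈ s, (cycleG n).Adj e.1 e.2) (hsol : applySwaps (Equiv.refl _) s = π) :
    ∃ L : ZMod n → ℤ, (∀ t, (L t : ZMod n) = π t) ∧ ∑ t, L t = ∑ t : ZMod n, (t.val : ℤ) ∧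
      ∑ p ∈ sortedPairs n, |lap L p| ≤ s.length := by
  have hval : ∀ t : ZMod n, ((t.val : ℤ) : ZMod n) = Equiv.refl _ t := by simp
  have hlap : ∀ p ∈ sortedPairs n, lap (fun t : ZMod n => (t.val : ℤ)) p = 0 := fun p hp => by
    have := (mem_filter.1 hp).2
    have := p.1.val_lt
    show ((p.1.val : ℤ) - p.2.val) / n = 0
    exact Int.ediv_eq_zero_of_lt (by omega) (by omega)
  refine ⟨s.foldl liftSwap fun t => (t.val : ℤ), fun t => hsol ▸ cast_foldl_liftSwap hs hval t,
    sum_foldl_liftSwap hs hval, ?_⟩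
  calc ∑ p ∈ sortedPairs n, |lap (s.foldl liftSwap fun t => (t.val : ℤ)) p|
      = ∑ p ∈ sortedPairs n,
          |lap (s.foldl liftSwap fun t => (t.val : ℤ)) p - lap (fun t : ZMod n => (t.val : ℤ)) p| :=
        sum_congr rfl fun p hp => by rw [hlap p hp, sub_zero]
    _ ≤ s.length := sum_abs_lap_foldl_liftSwap_sub_le hs hval

end Lift

section Target

variable {n m c : ℕ} [NeZero n]

def prevSpecial (c : ℕ) (t : ZMod n) : ZMod n := ((t.val / c * c : ℕ) : ZMod n)

/-- Special vertices are the multiples of `c`. In this lift of the target configuration every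
special token has moved `c` steps clockwise and every other token has stayed. -/
def targetLift (c : ℕ) (t : ZMod n) : ℤ := t.val + if c ∣ t.val then (c : ℤ) else 0

def gapPairs (n c : ℕ) [NeZero n] : Finset (ZMod n × ZMod n) :=
  ({t : ZMod n | ¬ c ∣ t.val} : Finset _).image fun t => (t, prevSpecial c t)

lemma val_prevSpecial (t : ZMod n) : (prevSpecial c t).val = t.val / c * c :=
  ZMod.val_cast_of_lt ((Nat.div_mul_le_self _ _).trans_lt t.val_lt)

lemma val_prevSpecial_lt {t : ZMod n} (ht : ¬ c ∣ t.val) : (prevSpecial c t).val < t.val := by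
  rw [val_prevSpecial]
  exact (Nat.div_mul_le_self _ _).lt_of_ne fun h => ht (Dvd.intro_left _ h)

lemma val_lt_val_prevSpecial_add (hc : 0 < c) (t : ZMod n) :
    t.val < (prevSpecial c t).val + c := by
  rw [val_prevSpecial]
  exact Nat.lt_div_mul_add hc

lemma prevSpecial_eq {t u : ZMod n} (hu : c ∣ u.val) (h1 : u.val ≤ t.val)
    (h2 : t.val < u.val + c) : prevSpecial c t = u := by
  obtain ⟨k, hk⟩ := hu
  apply ZMod.val_injective
  rw [val_prevSpecial, hk, Nat.div_eq_of_lt_le (k := k) (by rw [mul_comm]; omega)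
    (by rw [add_mul, mul_comm]; omega), mul_comm]

lemma val_add_le_of_dvd (hn : n = m * c) {v : ZMod n} (hv : c ∣ v.val) : v.val + c ≤ n := by
  obtain ⟨k, hk⟩ := hv
  have hlt : c * k < c * m := by rw [← hk, mul_comm c m, ← hn]; exact v.val_lt
  have := lt_of_mul_lt_mul_left' hlt
  rw [hk, hn]
  nlinarith

lemma val_natCast_mul (hn : n = m * c) {i : ℕ} (hi : i < m) :
    ((i * c : ℕ) : ZMod n).val = i * c := by
  refine ZMod.val_cast_of_lt ?_
  rw [hn]
  exact Nat.mul_lt_mul_of_pos_right hi (Nat.pos_of_mul_pos_left (hn ▸ NeZero.pos n))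

lemma card_filter_dvd_val (hn : n = m * c) :
    #{v : ZMod n | c ∣ v.val} = m := by
  have hc : 0 < c := Nat.pos_of_mul_pos_left (hn ▸ NeZero.pos n)
  rw [← card_range m]
  refine card_bij' (fun v _ => v.val / c) (fun i _ => ((i * c : ℕ) : ZMod n))
    (fun v _ => ?_) (fun i hi => ?_) (fun v hv => ?_) (fun i hi => ?_)
  · exact mem_range.2 (Nat.div_lt_of_lt_mul (by rw [mul_comm, ← hn]; exact v.val_lt))
  · rw [mem_range] at hi
    rw [mem_filter, val_natCast_mul hn hi]
    exact ⟨mem_univ _, dvd_mul_left c i⟩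
  · have hv := (mem_filter.1 hv).2
    exact prevSpecial_eq hv le_rfl (by omega)
  · rw [mem_range] at hi
    simp only [val_natCast_mul hn hi, Nat.mul_div_cancel _ hc]

lemma dvd_val_prevSpecial (t : ZMod n) : c ∣ (prevSpecial c t).val := by
  rw [val_prevSpecial]
  exact dvd_mul_left c _

lemma mem_gapPairs {p : ZMod n × ZMod n} :
    p ∈ gapPairs n c ↔ ¬ c ∣ p.1.val ∧ p.2 = prevSpecial c p.1 := by
  constructor
  · rintro h
    obtain ⟨t, ht, rfl⟩ := mem_image.1 h
    exact ⟨(mem_filter.1 ht).2, rfl⟩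
  · rintro ⟨h1, h2⟩
    exact mem_image.2 ⟨p.1, mem_filter.2 ⟨mem_univ _, h1⟩, by rw [← h2]⟩

lemma lap_targetLift (hn : n = m * c) {p : ZMod n × ZMod n} (hp : p ∈ sortedPairs n) :
    lap (targetLift c) p = if p ∈ gapPairs n c then -1 else 0 := by
  have hc : 0 < c := Nat.pos_of_mul_pos_left (hn ▸ NeZero.pos n)
  have hlt : p.2.val < p.1.val := (mem_filter.1 hp).2
  have h1n := p.1.val_lt
  simp only [mem_gapPairs, lap, targetLift]
  by_cases hs1 : c ∣ p.1.val <;> by_cases hs2 : c ∣ p.2.val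
  · simp only [hs1, hs2, if_true, not_true, false_and, if_false]
    apply Int.ediv_eq_zero_of_lt <;> omega
  · have := val_add_le_of_dvd hn hs1
    have : p.2.val ≠ 0 := fun h => hs2 (h ▸ dvd_zero c)
    simp only [hs1, hs2, if_true, not_true, false_and, if_false]
    apply Int.ediv_eq_zero_of_lt <;> omega
  · simp only [hs1, hs2, if_true, not_false_eq_true, true_and, if_false]
    split_ifs with hgap
    · have := val_lt_val_prevSpecial_add hc p.1
      rw [← hgap] at this
      have := val_add_le_of_dvd hn hs2
      rw [Int.ediv_eq_iff_of_pos (by omega)]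
      omega
    · have : p.2.val + c ≤ p.1.val := by
        by_contra! h
        exact hgap (prevSpecial_eq hs2 hlt.le h).symm
      apply Int.ediv_eq_zero_of_lt <;> omega
  · have : p.2 ≠ prevSpecial c p.1 := fun h => hs2 (h ▸ dvd_val_prevSpecial p.1)
    simp only [hs1, hs2, this, if_false, and_false]
    apply Int.ediv_eq_zero_of_lt <;> omega

lemma lap_add_mul (ℓ W : ZMod n → ℤ) (p : ZMod n × ZMod n) :
    lap (fun t => ℓ t + n * W t) p = lap ℓ p + (W p.1 - W p.2) := by
  rw [lap, lap, show ℓ p.1 + n * W p.1 - (ℓ p.2 + n * W p.2) =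
    ℓ p.1 - ℓ p.2 + n * (W p.1 - W p.2) by ring,
    Int.add_mul_ediv_left _ _ (by exact_mod_cast NeZero.ne n)]

lemma sum_targetLift (hn : n = m * c) :
    ∑ t : ZMod n, targetLift c t = ∑ t : ZMod n, (t.val : ℤ) + n := by
  simp only [targetLift, sum_add_distrib, ← sum_filter, sum_const, card_filter_dvd_val hn,
    nsmul_eq_mul]
  push_cast [hn]
  ring

lemma cast_targetLift_eq (hn : n = m * c) {π : Equiv.Perm (ZMod n)}
    (hπ1 : ∀ i < m, π ((i * c : ℕ) : ZMod n) = (((i + 1) * c : ℕ) : ZMod n))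
    (hπ2 : ∀ v : ZMod n, (∀ i < m, v ≠ ((i * c : ℕ) : ZMod n)) → π v = v) (t : ZMod n) :
    (targetLift c t : ZMod n) = π t := by
  unfold targetLift
  split_ifs with ht
  · obtain ⟨k, hk⟩ := ht
    have hkm : k < m := by
      have : c * k < c * m := by rw [← hk, mul_comm c m, ← hn]; exact t.val_lt
      exact lt_of_mul_lt_mul_left' this
    have htk : t = ((k * c : ℕ) : ZMod n) := by
      apply ZMod.val_injective
      rw [val_natCast_mul hn hkm, hk, mul_comm]
    rw [htk, hπ1 k hkm, val_natCast_mul hn hkm]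
    push_cast
    ring
  · rw [hπ2 t fun i hi h => ht (by rw [h, val_natCast_mul hn hi]; exact dvd_mul_left c i)]
    simp

end Target

section Combinatorics

variable {n m c : ℕ} [NeZero n]

lemma gapPairs_subset_sortedPairs : gapPairs n c ⊆ sortedPairs n := fun p hp => by
  obtain ⟨ht, hp2⟩ := mem_gapPairs.1 hp
  exact mem_filter.2 ⟨mem_univ _, hp2 ▸ val_prevSpecial_lt ht⟩

lemma sum_sortedPairs_abs_sub_sub_gap (x : ZMod n → ℤ) :
    ∑ p ∈ sortedPairs n, |x p.1 - x p.2 - if p ∈ gapPairs n c then 1 else 0| =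
      ∑ p ∈ sortedPairs n, |x p.1 - x p.2| +
        ∑ t ∈ {t : ZMod n | ¬ c ∣ t.val},
          (|x t - x (prevSpecial c t) - 1| - |x t - x (prevSpecial c t)|) := by
  rw [← sub_eq_iff_eq_add', ← sum_sub_distrib]
  calc ∑ p ∈ sortedPairs n,
        (|x p.1 - x p.2 - if p ∈ gapPairs n c then 1 else 0| - |x p.1 - x p.2|)
      = ∑ p ∈ gapPairs n c,
          (|x p.1 - x p.2 - if p ∈ gapPairs n c then 1 else 0| - |x p.1 - x p.2|) :=
        (sum_subset gapPairs_subset_sortedPairs fun p _ hp => by simp [hp]).symm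
    _ = ∑ p ∈ gapPairs n c, (|x p.1 - x p.2 - 1| - |x p.1 - x p.2|) :=
        sum_congr rfl fun p hp => by simp [hp]
    _ = _ := sum_image fun t _ u _ h => congrArg Prod.fst h

lemma sum_sortedPairs_filter_mem_iff_not_mem (A : Finset (ZMod n)) (f : ZMod n → ZMod n → ℤ)
    (hf : ∀ a b, f a b = f b a) :
    ∑ p ∈ (sortedPairs n).filter (fun p => p.1 ∈ A ↔ p.2 ∉ A), f p.1 p.2 =
      ∑ a ∈ A, ∑ b ∈ Aᶜ, f a b := by
  rw [← sum_product']
  refine sum_nbij' (fun p => if p.1 ∈ A then p else p.swap)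
    (fun q => if q.2.val < q.1.val then q else q.swap) (fun p hp => ?_) (fun q hq => ?_)
    (fun p hp => ?_) (fun q hq => ?_) (fun p hp => ?_)
  all_goals simp only [sortedPairs, mem_filter, mem_univ, true_and,
    mem_product, mem_compl] at *
  · split_ifs with h <;> simp_all
  · have hne : q.1.val ≠ q.2.val := fun h => by
      rw [ZMod.val_injective n h] at hq
      exact hq.2 hq.1
    split_ifs with h
    · exact ⟨h, by tauto⟩
    · simp only [Prod.fst_swap, Prod.snd_swap]
      exact ⟨by omega, by tauto⟩
  · by_cases h : p.1 ∈ A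
    · simp [h, hp.1]
    · simp [h, hp.1.not_gt]
  · by_cases h : q.2.val < q.1.val <;> simp [h, hq.1, hq.2]
  · split_ifs
    · rfl
    · exact hf _ _

lemma card_mul_sum_add_sum_le_sum_abs_sub {x : ZMod n → ℤ} (hx : ∀ v, 0 ≤ x v) :
    (#{v | x v = 0} : ℤ) * ∑ v, x v +
      ∑ t ∈ {t : ZMod n | ¬ c ∣ t.val ∧ x t ≠ 0 ∧ x (prevSpecial c t) ≠ 0},
        |x t - x (prevSpecial c t)| ≤ ∑ p ∈ sortedPairs n, |x p.1 - x p.2| := by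
  set Z : Finset (ZMod n) := {v | x v = 0}
  rw [← sum_filter_add_sum_filter_not (sortedPairs n) (fun p => p.1 ∈ Z ↔ p.2 ∉ Z),
    sum_sortedPairs_filter_mem_iff_not_mem Z (fun a b => |x a - x b|) fun a b => abs_sub_comm _ _]
  refine add_le_add (le_of_eq ?_) ?_
  · have hZ : ∑ v ∈ Z, x v = 0 := sum_eq_zero fun v hv => (mem_filter.1 hv).2
    calc (#Z : ℤ) * ∑ v, x v = ∑ _a ∈ Z, ∑ b ∈ Zᶜ, x b := by
          rw [sum_const, ← sum_compl_add_sum Z, hZ, add_zero, nsmul_eq_mul]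
      _ = ∑ a ∈ Z, ∑ b ∈ Zᶜ, |x a - x b| := sum_congr rfl fun a ha => sum_congr rfl fun b _ => by
          rw [(mem_filter.1 ha).2, zero_sub, abs_neg, abs_of_nonneg (hx b)]
  · calc ∑ t ∈ {t : ZMod n | ¬ c ∣ t.val ∧ x t ≠ 0 ∧ x (prevSpecial c t) ≠ 0},
          |x t - x (prevSpecial c t)|
        = ∑ p ∈ ({t : ZMod n | ¬ c ∣ t.val ∧ x t ≠ 0 ∧ x (prevSpecial c t) ≠ 0} : Finset _).image
            (fun t => (t, prevSpecial c t)), |x p.1 - x p.2| :=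
          by rw [sum_image fun t _ u _ h => congrArg Prod.fst h]
      _ ≤ ∑ p ∈ (sortedPairs n).filter (fun p => ¬ (p.1 ∈ Z ↔ p.2 ∉ Z)), |x p.1 - x p.2| := by
          refine sum_le_sum_of_subset_of_nonneg (fun p hp => ?_) fun _ _ _ => abs_nonneg _
          obtain ⟨t, ht, rfl⟩ := mem_image.1 hp
          obtain ⟨htc, ht0, hg0⟩ := (mem_filter.1 ht).2
          refine mem_filter.2 ⟨gapPairs_subset_sortedPairs (mem_gapPairs.2 ⟨htc, rfl⟩), ?_⟩
          simp [Z, ht0, hg0]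

lemma card_filter_prevSpecial_mem_le (hc : 0 < c) (Z : Finset (ZMod n)) :
    #{t : ZMod n | ¬ c ∣ t.val ∧ prevSpecial c t ∈ Z} ≤ (c - 1) * #Z := by
  refine card_le_mul_card_image_of_maps_to (f := prevSpecial c) (fun t ht => (mem_filter.1 ht).2.2)
    _ fun b _ => ?_
  calc #{t ∈ ({t : ZMod n | ¬ c ∣ t.val ∧ prevSpecial c t ∈ Z} : Finset _) | prevSpecial c t = b}
      ≤ #(Ioo b.val (b.val + c)) := by
        refine card_le_card_of_injOn ZMod.val (fun t ht => ?_) (ZMod.val_injective n).injOn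
        simp only [coe_filter, mem_filter, mem_univ, true_and, Set.mem_ofPred_eq] at ht
        obtain ⟨⟨htc, -⟩, rfl⟩ := ht
        exact mem_Ioo.2 ⟨val_prevSpecial_lt htc, val_lt_val_prevSpecial_add hc t⟩
    _ = c - 1 := by simp

lemma card_sub_card_add_card_le_sum {x : ZMod n → ℤ} (hx : ∀ v, 0 ≤ x v) :
    (n : ℤ) - #{v | x v = 0} + #{v | 2 ≤ x v} ≤ ∑ v, x v := by
  have hcard : #{v | x v = 0} + #{v | ¬ x v = 0} = n := by
    rw [card_filter_add_card_filter_not, card_univ, ZMod.card]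
  calc (n : ℤ) - #{v | x v = 0} + #{v | 2 ≤ x v}
      = ∑ v, ((if ¬ x v = 0 then 1 else 0) + if 2 ≤ x v then 1 else 0) := by
        rw [sum_add_distrib, sum_boole, sum_boole]
        omega
    _ ≤ ∑ v, x v := sum_le_sum fun v _ => by have := hx v; split_ifs <;> omega

lemma one_sub_le_abs_sub_sub_one {a b : ℤ} (ha : 0 ≤ a) (hb : 0 ≤ b) :
    1 - 2 * (if b = 0 then 1 else 0) - (if 2 ≤ a then 1 else 0) ≤
      |a - b - 1| - |a - b| + if a ≠ 0 ∧ b ≠ 0 then |a - b| else 0 := by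
  simp only [abs_eq_max_neg]
  split_ifs <;> omega

lemma card_sub_two_mul_card_sub_card_le_sum {x : ZMod n → ℤ} (hx : ∀ v, 0 ≤ x v) :
    (#{t : ZMod n | ¬ c ∣ t.val} : ℤ) - 2 * #{t : ZMod n | ¬ c ∣ t.val ∧ x (prevSpecial c t) = 0} -
        #{t : ZMod n | ¬ c ∣ t.val ∧ 2 ≤ x t} ≤
      ∑ t ∈ {t : ZMod n | ¬ c ∣ t.val},
          (|x t - x (prevSpecial c t) - 1| - |x t - x (prevSpecial c t)|) +
        ∑ t ∈ {t : ZMod n | ¬ c ∣ t.val ∧ x t ≠ 0 ∧ x (prevSpecial c t) ≠ 0},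
          |x t - x (prevSpecial c t)| := by
  calc _ = ∑ t ∈ {t : ZMod n | ¬ c ∣ t.val},
        (1 - 2 * (if x (prevSpecial c t) = 0 then 1 else 0) - (if 2 ≤ x t then 1 else 0)) := by
        rw [sum_sub_distrib, sum_sub_distrib, ← mul_sum, sum_boole, sum_boole, filter_filter,
          filter_filter, sum_const, nsmul_one]
    _ ≤ _ := sum_le_sum fun t _ => one_sub_le_abs_sub_sub_one (hx t) (hx _)
    _ = _ := by rw [sum_add_distrib, ← sum_filter, filter_filter]

theorem le_sum_abs_sub_sub_gap (hm : 2 ≤ m) (hn : n = m * c) {x : ZMod n → ℤ}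
    (hx : ∀ v, 0 ≤ x v) (hZ : ∃ v, x v = 0) (hσ : (n : ℤ) - 1 ≤ ∑ v, x v) :
    2 * (n : ℤ) - m - 2 * c + 1 ≤
      ∑ p ∈ sortedPairs n, |x p.1 - x p.2 - if p ∈ gapPairs n c then 1 else 0| := by
  have hc : 0 < c := Nat.pos_of_mul_pos_left (hn ▸ NeZero.pos n)
  have h2c : 2 * (c : ℤ) ≤ n := by rw [hn]; push_cast; nlinarith
  have hO : (#{t : ZMod n | ¬ c ∣ t.val} : ℤ) = n - m := by
    have := card_filter_add_card_filter_not (s := univ) (p := fun t : ZMod n => c ∣ t.val)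
    rw [card_filter_dvd_val hn, card_univ, ZMod.card] at this
    omega
  have hZpos : (1 : ℤ) ≤ #{v | x v = 0} := by
    exact_mod_cast card_pos.2 <| hZ.elim fun v hv => ⟨v, by simp [hv]⟩
  have hgapZ : (#{t : ZMod n | ¬ c ∣ t.val ∧ x (prevSpecial c t) = 0} : ℤ) ≤
      ((c - 1 : ℕ) : ℤ) * #{v | x v = 0} := by
    exact_mod_cast (by simpa using card_filter_prevSpecial_mem_le hc {v | x v = 0})
  rw [Nat.cast_pred hc] at hgapZ
  have hN : (#{t : ZMod n | ¬ c ∣ t.val ∧ 2 ≤ x t} : ℤ) ≤ #{v | 2 ≤ x v} := by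
    refine Nat.cast_le.2 (card_le_card fun t ht => ?_)
    simp only [mem_filter] at ht ⊢
    exact ⟨ht.1, ht.2.2⟩
  have hgaps := card_sub_two_mul_card_sub_card_le_sum (c := c) hx
  have hpairs := card_mul_sum_add_sum_le_sum_abs_sub (c := c) hx
  have hσN := card_sub_card_add_card_le_sum hx
  rw [sum_sortedPairs_abs_sub_sub_gap]
  nlinarith [mul_nonneg (sub_nonneg.2 hZpos) (sub_nonneg.2 hσ),
    mul_nonneg (sub_nonneg.2 hZpos) (sub_nonneg.2 h2c)]

end Combinatorics

theorem le_sum_abs_lap {n m c : ℕ} [NeZero n] (hm : 2 ≤ m) (hn : n = m * c) {L : ZMod n → ℤ}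
    (hL : ∀ t, (L t : ZMod n) = targetLift c t) (hsum : ∑ t, L t = ∑ t : ZMod n, (t.val : ℤ)) :
    2 * (n : ℤ) - m - 2 * c + 1 ≤ ∑ p ∈ sortedPairs n, |lap L p| := by
  have hn0 : (0 : ℤ) < n := by exact_mod_cast NeZero.pos n
  obtain ⟨W, rfl⟩ : ∃ W : ZMod n → ℤ, L = fun t => targetLift c t + n * W t := by
    choose W hW using fun t => (ZMod.intCast_eq_intCast_iff_dvd_sub _ _ _).1 (hL t).symm
    exact ⟨W, funext fun t => by linarith [hW t]⟩
  have hWsum : ∑ t, W t = -1 := by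
    rw [sum_add_distrib, ← mul_sum, sum_targetLift hn] at hsum
    exact mul_left_cancel₀ hn0.ne' (by linarith)
  obtain ⟨v₀, -, hv₀⟩ := exists_min_image univ W univ_nonempty
  have hmin : W v₀ ≤ -1 := by
    by_contra! h
    have : 0 ≤ ∑ t, W t := sum_nonneg fun t _ => by linarith [hv₀ t (mem_univ t)]
    omega
  have hσ : (n : ℤ) - 1 ≤ ∑ v, (W v - W v₀) := by
    rw [sum_sub_distrib, hWsum, sum_const, card_univ, ZMod.card, nsmul_eq_mul]
    nlinarith
  calc 2 * (n : ℤ) - m - 2 * c + 1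
      ≤ ∑ p ∈ sortedPairs n,
          |(W p.1 - W v₀) - (W p.2 - W v₀) - if p ∈ gapPairs n c then 1 else 0| :=
        le_sum_abs_sub_sub_gap (x := fun v => W v - W v₀) hm hn
          (fun v => sub_nonneg.2 (hv₀ v (mem_univ v))) ⟨v₀, sub_self _⟩ hσ
    _ = ∑ p ∈ sortedPairs n, |lap (fun t => targetLift c t + n * W t) p| :=
        sum_congr rfl fun p hp => by
          rw [lap_add_mul, lap_targetLift hn hp]
          split_ifs <;> ring_nf

theorem stmt14_general (p q m : ℕ) (hm : p = 2 * m) (hq : 2 ≤ q)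
    (π : Equiv.Perm (ZMod (p * (q - 1))))
    (hπ1 : ∀ i < m, π ((i * (2 * q - 2) : ℕ) : ZMod (p * (q - 1))) =
      (((i + 1) * (2 * q - 2) : ℕ) : ZMod (p * (q - 1))))
    (hπ2 : ∀ v : ZMod (p * (q - 1)),
      (∀ i < m, v ≠ ((i * (2 * q - 2) : ℕ) : ZMod (p * (q - 1)))) → π v = v)
    (s : List (ZMod (p * (q - 1)) × ZMod (p * (q - 1))))
    (hadj : ∀ e ∈ s, (cycleG (p * (q - 1))).Adj e.1 e.2)
    (hsol : applySwaps (Equiv.refl (ZMod (p * (q - 1)))) s = π) :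
    2 * (p : ℝ) * q - 5 * p / 2 - 4 * q < (s.length : ℝ) := by
  have hlen : (0 : ℝ) ≤ s.length := Nat.cast_nonneg _
  rcases lt_or_ge m 2 with hm2 | hm2
  · -- for `p ≤ 2` the bound is negative
    have hq' : (2 : ℝ) ≤ q := by exact_mod_cast hq
    interval_cases m <;> subst hm <;> push_cast <;> linarith
  have hn : p * (q - 1) = m * (2 * q - 2) := by
    rw [hm]
    zify [(by omega : 1 ≤ q), (by omega : 2 ≤ 2 * q)]
    ring
  have : NeZero (p * (q - 1)) := ⟨by rw [hn]; exact Nat.mul_ne_zero (by omega) (by omega)⟩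
  obtain ⟨L, hLπ, hLsum, hLlen⟩ := exists_lift_of_applySwaps hadj hsol
  have hbound := le_sum_abs_lap hm2 hn
    (fun t => (hLπ t).trans (cast_targetLift_eq hn hπ1 hπ2 t).symm) hLsum
  have key : 2 * ((p * (q - 1) : ℕ) : ℤ) - m - 2 * ((2 * q - 2 : ℕ) : ℤ) + 1 ≤ s.length :=
    hbound.trans hLlen
  push_cast [Nat.cast_sub (by omega : 1 ≤ q), Nat.cast_sub (by omega : 2 ≤ 2 * q)] at key
  have keyR : 2 * ((p : ℝ) * (q - 1)) - m - 2 * (2 * q - 2) + 1 ≤ s.length := by exact_mod_cast key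
  have hpR : (p : ℝ) = 2 * m := by exact_mod_cast hm
  rw [hpR] at keyR ⊢
  linarith

/-- On a cycle of length `p(q-1)` with `p/2 = m` special vertices spaced
`2q-2` apart, each carrying a token whose target is the next special vertex
`2q-2` steps clockwise and every other token fixed, any solving swap sequence
(along edges of this cycle) has length greater than `2pq − 5p/2 − 4q`. -/
theorem stmt14 (p q m : ℕ) (hm : p = 2 * m) (hp : 2 ≤ p) (hq : 2 ≤ q)
    (π : Equiv.Perm (ZMod (p * (q - 1))))
    (hπ1 : ∀ i < m, π ((i * (2 * q - 2) : ℕ) : ZMod (p * (q - 1))) =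
      (((i + 1) * (2 * q - 2) : ℕ) : ZMod (p * (q - 1))))
    (hπ2 : ∀ v : ZMod (p * (q - 1)),
      (∀ i < m, v ≠ ((i * (2 * q - 2) : ℕ) : ZMod (p * (q - 1)))) → π v = v)
    (s : List (ZMod (p * (q - 1)) × ZMod (p * (q - 1))))
    (hadj : ∀ e ∈ s, (cycleG (p * (q - 1))).Adj e.1 e.2)
    (hsol : applySwaps (Equiv.refl (ZMod (p * (q - 1)))) s = π) :
    2 * (p : ℝ) * q - 5 * p / 2 - 4 * q < (s.length : ℝ) :=
  stmt14_general p q m hm hq π hπ1 hπ2 s hadj hsol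
end
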